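/- Fix ε = −1 (first type) or ε = +1 (second type) and suppose f ≡ k on J for a nonzero constant k, where J is an open interval containing more than one point (note the regularity conditions then force g'(u) ≠ 0 and α²k² + εβ²g(u)² ≠ 0 of constant sign for all u ∈ J). Then for every u ∈ J, K_φ(u) = (α²β²k² − 2δ(α²k² + εβ²g(u)²)²) / (α²k² + εβ²g(u)²)², and the function K_φ is not constant on J. -/

import Mathlib

open Real Set

/-- Weighted Gaussian curvature of the timelike general rotational surface `S_i`
(`ε = -1` for the first type, `ε = 1` for the second type) in `E₁⁴` with
density `e^{λ₁x²+λ₂y²+λ₃z²+λ₄t²}`, where `δ = λ₁+λ₂+λ₃−λ₄`. -/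
noncomputable def Kphi (α β δ ε : ℝ) (f g : ℝ → ℝ) (u : ℝ) : ℝ :=
  (-2 * δ * (α ^ 2 * (f u) ^ 2 + ε * β ^ 2 * (g u) ^ 2) ^ 2
      * (-ε * (deriv f u) ^ 2 + (deriv g u) ^ 2) ^ 2
    + α ^ 2 * β ^ 2 * (g u * deriv f u - f u * deriv g u) ^ 2
      * (-ε * (deriv f u) ^ 2 + (deriv g u) ^ 2)
    + (ε * α ^ 2 * (f u) ^ 2 + β ^ 2 * (g u) ^ 2)
      * (β ^ 2 * g u * deriv f u + α ^ 2 * f u * deriv g u)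
      * (deriv (deriv f) u * deriv g u - deriv f u * deriv (deriv g) u))
  / ((α ^ 2 * (f u) ^ 2 + ε * β ^ 2 * (g u) ^ 2) ^ 2
      * (-ε * (deriv f u) ^ 2 + (deriv g u) ^ 2) ^ 2)


theorem Kphi_of_const_f_and_not_constant
    (J : Set ℝ) (hJo : IsOpen J) (hJc : J.OrdConnected)
    (hJ2 : ∃ x ∈ J, ∃ y ∈ J, x ≠ y)
    (f g : ℝ → ℝ) (k : ℝ) (hk : k ≠ 0) (hfk : ∀ u, f u = k)
    (hg : ContDiffOn ℝ (⊤ : ℕ∞) g J)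
    (α β l1 l2 l3 l4 δ ε : ℝ) (hα : 0 < α) (hβ : 0 < β)
    (hl : ¬(l1 = 0 ∧ l2 = 0 ∧ l3 = 0 ∧ l4 = 0)) (hδ : δ = l1 + l2 + l3 - l4)
    (hε : ε = -1 ∨ ε = 1)
    (hreg : ∀ u ∈ J, 0 < -ε * (deriv f u) ^ 2 + (deriv g u) ^ 2
        ∧ 0 < ε * α ^ 2 * (f u) ^ 2 + β ^ 2 * (g u) ^ 2) :
    (∀ u ∈ J, Kphi α β δ ε f g u
        = (α ^ 2 * β ^ 2 * k ^ 2 - 2 * δ * (α ^ 2 * k ^ 2 + ε * β ^ 2 * (g u) ^ 2) ^ 2)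
            / (α ^ 2 * k ^ 2 + ε * β ^ 2 * (g u) ^ 2) ^ 2)
    ∧ ¬ ∃ c : ℝ, ∀ u ∈ J, Kphi α β δ ε f g u = c := by
  obtain ⟨u0, hu0, u1, hu1, hne01⟩ := hJ2
  have hf : f = fun _ => k := funext hfk
  have hdf : deriv f = fun _ => 0 := by rw [hf]; simp
  have hddf : deriv (deriv f) = fun _ => 0 := by rw [hdf]; simp
  have hε0 : ε ≠ 0 := by rcases hε with h | h <;> rw [h] <;> norm_num
  have hg' : ∀ u ∈ J, deriv g u ≠ 0 := by
    intro u hu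
    have h := (hreg u hu).1
    rw [hdf] at h
    simp only at h
    intro h0
    rw [h0] at h
    simp at h
  have hA : ∀ u ∈ J, α ^ 2 * k ^ 2 + ε * β ^ 2 * (g u) ^ 2 ≠ 0 := by
    intro u hu
    have h2 := (hreg u hu).2
    rw [hfk] at h2
    have hak : 0 < α ^ 2 * k ^ 2 := by positivity
    rcases hε with h | h <;> rw [h] at h2 ⊢ <;> intro hcon <;> nlinarith
  have hpart1 : ∀ u ∈ J, Kphi α β δ ε f g u
      = (α ^ 2 * β ^ 2 * k ^ 2 - 2 * δ * (α ^ 2 * k ^ 2 + ε * β ^ 2 * (g u) ^ 2) ^ 2)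
          / (α ^ 2 * k ^ 2 + ε * β ^ 2 * (g u) ^ 2) ^ 2 := by
    intro u hu
    unfold Kphi
    simp only [hfk, hdf, hddf, deriv_const]
    field_simp [hA u hu, hg' u hu]
    ring
  refine ⟨hpart1, ?_⟩
  rintro ⟨c, hc⟩
  have key : ∀ u ∈ J, α ^ 2 * β ^ 2 * k ^ 2
      = (c + 2 * δ) * (α ^ 2 * k ^ 2 + ε * β ^ 2 * (g u) ^ 2) ^ 2 := by
    intro u hu
    have h1 := (hpart1 u hu).symm.trans (hc u hu)
    have hA2 : (α ^ 2 * k ^ 2 + ε * β ^ 2 * (g u) ^ 2) ^ 2 ≠ 0 := pow_ne_zero 2 (hA u hu)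
    rw [div_eq_iff hA2] at h1
    linear_combination h1
  have hcd : c + 2 * δ ≠ 0 := by
    intro h0
    have hk0 := key u0 hu0
    rw [h0, zero_mul] at hk0
    have : (0:ℝ) < α ^ 2 * β ^ 2 * k ^ 2 := by positivity
    linarith
  have hg0 : ∀ u ∈ J, g u = 0 := by
    intro u hu
    have hgd : DifferentiableAt ℝ g u :=
      (hg.differentiableOn (by simp)).differentiableAt (hJo.mem_nhds hu)
    have hin : HasDerivAt (fun x => α ^ 2 * k ^ 2 + ε * β ^ 2 * (g x) ^ 2)
        (ε * β ^ 2 * (2 * g u * deriv g u)) u := by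
      have h := ((hgd.hasDerivAt.fun_pow 2).const_mul (ε * β ^ 2)).const_add (α ^ 2 * k ^ 2)
      exact h.congr_deriv (by ring)
    have hF : HasDerivAt (fun x => (c + 2 * δ) * (α ^ 2 * k ^ 2 + ε * β ^ 2 * (g x) ^ 2) ^ 2)
        ((c + 2 * δ) * (2 * (α ^ 2 * k ^ 2 + ε * β ^ 2 * (g u) ^ 2)
          * (ε * β ^ 2 * (2 * g u * deriv g u)))) u := by
      have h := (hin.fun_pow 2).const_mul (c + 2 * δ)
      exact h.congr_deriv (by ring)
    have hEq : (fun x => (c + 2 * δ) * (α ^ 2 * k ^ 2 + ε * β ^ 2 * (g x) ^ 2) ^ 2)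
        =ᶠ[nhds u] fun _ => α ^ 2 * β ^ 2 * k ^ 2 := by
      filter_upwards [hJo.mem_nhds hu] with x hx
      exact (key x hx).symm
    have hd0 : (c + 2 * δ) * (2 * (α ^ 2 * k ^ 2 + ε * β ^ 2 * (g u) ^ 2)
        * (ε * β ^ 2 * (2 * g u * deriv g u))) = 0 := by
      rw [← hF.deriv, hEq.deriv_eq]
      simp
    by_contra hgu0
    have hne : (c + 2 * δ) * (2 * (α ^ 2 * k ^ 2 + ε * β ^ 2 * (g u) ^ 2)
        * (ε * β ^ 2 * (2 * g u * deriv g u))) ≠ 0 := by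
      apply mul_ne_zero hcd
      apply mul_ne_zero (mul_ne_zero two_ne_zero (hA u hu))
      exact mul_ne_zero (mul_ne_zero hε0 (pow_ne_zero 2 hβ.ne'))
        (mul_ne_zero (mul_ne_zero two_ne_zero hgu0) (hg' u hu))
    exact hne hd0
  have hgd0 : deriv g u0 = 0 := by
    have hEq : g =ᶠ[nhds u0] fun _ => (0:ℝ) := by
      filter_upwards [hJo.mem_nhds hu0] with x hx
      exact hg0 x hx
    rw [hEq.deriv_eq]
    simp
  exact hg' u0 hu0 hgd0
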